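/- arXiv:2205.13739 — 3 statements merged into one kernel-verified Lean document; each statement's English description precedes it below -/
import Mathlib

section
/- If κ ∈ K_{k+1} (the (k+1)-th Garding cone) and κ_i > 0 for some index i, then ∂H_k/∂κ_i(κ) ≤ H_k(κ)/κ_i. -/
open Finset

/-- The normalized k-th elementary symmetric polynomial `H_k`. -/
noncomputable def nH (n k : ℕ) (κ : Fin n → ℝ) : ℝ :=
  (n.choose k : ℝ)⁻¹ * ∑ s ∈ Finset.univ.powersetCard k, ∏ i ∈ s, κ i

/-- Partial derivative of `f` in the `i`-th variable at `κ`. -/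
noncomputable def pd {n : ℕ} (f : (Fin n → ℝ) → ℝ) (i : Fin n) (κ : Fin n → ℝ) : ℝ :=
  deriv (fun t => f (Function.update κ i t)) (κ i)

/-- The k-th Garding cone `K_k`. -/
def GC (n k : ℕ) : Set (Fin n → ℝ) :=
  {κ | ∀ j : ℕ, 1 ≤ j → j ≤ k → 0 < nH n j κ}

/-!
Write `σ_j` for the elementary symmetric functions of `κ` with `κ_i` removed. Then
`C(n,k) H_k = σ_k + κ_i σ_{k-1}` and `C(n,k) ∂H_k/∂κ_i = σ_{k-1}`, so the claim says `σ_k ≥ 0`,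
i.e. `∂H_{k+1}/∂κ_i ≥ 0`. If `σ_k < 0`, positivity of `H_k` and `H_{k+1}` gives
`κ_i σ_{k-1} > -σ_k > 0` and `σ_{k+1} > -κ_i σ_k > 0`, hence `σ_{k-1} σ_{k+1} > σ_k²`,
contradicting Newton's inequality.

Newton's inequality `E_j E_{j+2} ≤ E_{j+1}²` for the normalized coefficients `E_j = a_j / C(m, j)`
of a real-rooted polynomial of degree `m` goes by induction on `m`: differentiation (by Rolle) and
reversal preserve real-rootedness and only shift the `E_j`, which reduces it to a quadratic, where
it is the nonnegativity of the discriminant.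
-/

theorem Nat.choose_mul_choose_add_two_le_sq (n j : ℕ) :
    n.choose j * n.choose (j + 2) ≤ n.choose (j + 1) ^ 2 := by
  rcases le_or_gt n j with hnj | hjn
  · simp [Nat.choose_eq_zero_of_lt (by omega : n < j + 2)]
  obtain ⟨d, rfl⟩ : ∃ d, n = j + 1 + d := ⟨n - (j + 1), by omega⟩
  have h1 := Nat.choose_succ_right_eq (j + 1 + d) j
  have h2 := Nat.choose_succ_right_eq (j + 1 + d) (j + 1)
  rw [show j + 1 + d - j = d + 1 by omega] at h1
  rw [show j + 1 + d - (j + 1) = d by omega] at h2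
  refine Nat.le_of_mul_le_mul_right (c := (d + 1) * (j + 2)) ?_ (Nat.mul_pos (by omega) (by omega))
  calc (j + 1 + d).choose j * (j + 1 + d).choose (j + 2) * ((d + 1) * (j + 2))
        = ((j + 1 + d).choose j * (d + 1)) * ((j + 1 + d).choose (j + 2) * (j + 2)) := by ring
    _ = ((j + 1 + d).choose (j + 1) * (j + 1)) * ((j + 1 + d).choose (j + 1) * d) := by
        rw [← h1, ← h2]
    _ ≤ (j + 1 + d).choose (j + 1) ^ 2 * ((d + 1) * (j + 2)) := by
        rw [mul_mul_mul_comm, ← sq]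
        exact Nat.mul_le_mul_left _ (by nlinarith)

namespace Polynomial

variable {K : Type*} [Field K]

noncomputable def normalizedCoeff (p : K[X]) (j : ℕ) : K :=
  p.coeff j / p.natDegree.choose j

theorem normalizedCoeff_derivative [CharZero K] (p : K[X]) (j : ℕ) :
    normalizedCoeff (derivative p) j = p.natDegree * normalizedCoeff p (j + 1) := by
  rw [normalizedCoeff, normalizedCoeff, natDegree_derivative, coeff_derivative]
  obtain h | ⟨m, h⟩ : p.natDegree = 0 ∨ ∃ m, p.natDegree = m + 1 := by
    rcases p.natDegree with _ | m <;> simp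
  · simp [h, coeff_eq_zero_of_natDegree_lt (show p.natDegree < j + 1 by omega)]
  rw [h, Nat.add_sub_cancel]
  rcases le_or_gt j m with hj | hj
  · have hchoose : ((m + 1 : ℕ) : K) * m.choose j = (m + 1).choose (j + 1) * (j + 1) := by
      exact_mod_cast Nat.add_one_mul_choose_eq m j
    have h1 : (m.choose j : K) ≠ 0 := by exact_mod_cast (Nat.choose_pos hj).ne'
    have h2 : ((m + 1).choose (j + 1) : K) ≠ 0 := by
      exact_mod_cast (Nat.choose_pos (by omega)).ne'
    rw [mul_div_assoc', div_eq_div_iff h1 h2]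
    push_cast at hchoose ⊢
    linear_combination (-p.coeff (j + 1)) * hchoose
  · simp [Nat.choose_eq_zero_of_lt hj, Nat.choose_eq_zero_of_lt (show m + 1 < j + 1 by omega)]

theorem normalizedCoeff_reverse (p : K[X]) (h0 : p.coeff 0 ≠ 0) {j : ℕ}
    (hj : j ≤ p.natDegree) :
    normalizedCoeff p.reverse j = normalizedCoeff p (p.natDegree - j) := by
  have hdeg : p.reverse.natDegree = p.natDegree := by
    rw [reverse_natDegree, natTrailingDegree_eq_zero.2 (Or.inr h0), Nat.sub_zero]
  rw [normalizedCoeff, normalizedCoeff, hdeg, coeff_reverse, revAt_le hj, Nat.choose_symm hj]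

theorem Splits.reverse {p : K[X]} (hp : p.Splits) : p.reverse.Splits := by
  induction hp using Submonoid.closure_induction with
  | mem f hf =>
    refine Splits.of_natDegree_le_one ((reverse_natDegree_le f).trans ?_)
    rcases hf with ⟨a, rfl⟩ | ⟨a, rfl⟩
    · simp
    · exact (natDegree_X_add_C a).le
  | one => simpa only [← C_1, reverse_C] using Splits.C (1 : K)
  | mul f g _ _ hf hg => rw [reverse_mul_of_domain]; exact hf.mul hg

theorem Splits.derivative {p : ℝ[X]} (hp : p.Splits) : p.derivative.Splits := by
  rw [splits_iff_card_roots] at hp ⊢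
  have := p.card_roots_le_derivative
  have := p.derivative.card_roots'
  rw [natDegree_derivative] at *
  omega

theorem Splits.discrim_nonneg [LinearOrder K] [IsStrictOrderedRing K] {p : K[X]}
    (hp : p.Splits) (h2 : p.natDegree = 2) :
    0 ≤ discrim (p.coeff 2) (p.coeff 1) (p.coeff 0) := by
  have hp0 : p ≠ 0 := by rintro rfl; simp at h2
  obtain ⟨x, hx⟩ := hp.exists_eval_eq_zero (by rw [degree_eq_natDegree hp0, h2]; decide)
  rw [eval_eq_sum_range, h2] at hx
  simp only [Finset.sum_range_succ, Finset.sum_range_zero, pow_zero, pow_one, mul_one,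
    zero_add] at hx
  rw [discrim_eq_sq_of_quadratic_eq_zero (x := x) (by linear_combination hx)]
  positivity

theorem Splits.normalizedCoeff_mul_le_sq {p : ℝ[X]} (hp : p.Splits) {j : ℕ}
    (hj : j + 2 ≤ p.natDegree) :
    normalizedCoeff p j * normalizedCoeff p (j + 2) ≤ normalizedCoeff p (j + 1) ^ 2 := by
  induction hm : p.natDegree using Nat.strong_induction_on generalizing p j with
  | _ m ih =>
  have succ_case : ∀ q : ℝ[X], q.Splits → q.natDegree = m → ∀ i, i + 3 ≤ m →
      normalizedCoeff q (i + 1) * normalizedCoeff q (i + 3) ≤ normalizedCoeff q (i + 2) ^ 2 := by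
    intro q hq hqm i hi
    have h := ih (m - 1) (by omega) hq.derivative (j := i) (by rw [natDegree_derivative]; omega)
      (by rw [natDegree_derivative, hqm])
    simp only [normalizedCoeff_derivative, hqm] at h
    rw [mul_pow, mul_mul_mul_comm, ← sq] at h
    have hm0 : (0 : ℝ) < m := by exact_mod_cast (show 0 < m by omega)
    exact le_of_mul_le_mul_left h (pow_pos hm0 2)
  rcases j with _ | i
  · by_cases h0 : p.coeff 0 = 0
    · simp only [normalizedCoeff, h0, zero_div, zero_mul]
      positivity
    rcases (show m = 2 ∨ 3 ≤ m by omega) with rfl | h3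
    · have := hp.discrim_nonneg hm
      simp only [normalizedCoeff, hm, discrim, zero_add, Nat.choose_zero_right, Nat.choose_self,
        Nat.choose_one_right, Nat.cast_one, Nat.cast_ofNat, div_one] at this ⊢
      linarith
    · have hrev : p.reverse.natDegree = m := by
        rw [reverse_natDegree, natTrailingDegree_eq_zero.2 (Or.inr h0), hm, Nat.sub_zero]
      have h := succ_case p.reverse hp.reverse hrev (m - 3) (by omega)
      rw [normalizedCoeff_reverse p h0 (by omega), normalizedCoeff_reverse p h0 (by omega),
        normalizedCoeff_reverse p h0 (by omega), hm, show m - (m - 3 + 1) = 2 by omega,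
        show m - (m - 3 + 3) = 0 by omega, show m - (m - 3 + 2) = 1 by omega] at h
      linarith
  · exact succ_case p hp hm i (by omega)

theorem Splits.coeff_mul_coeff_le_sq {p : ℝ[X]} (hp : p.Splits) (j : ℕ) :
    p.coeff j * p.coeff (j + 2) ≤ p.coeff (j + 1) ^ 2 := by
  by_cases hj : j + 2 ≤ p.natDegree
  · have newton := hp.normalizedCoeff_mul_le_sq hj
    set m := p.natDegree
    have hC : (m.choose j : ℝ) * m.choose (j + 2) ≤ (m.choose (j + 1) : ℝ) ^ 2 := by
      exact_mod_cast Nat.choose_mul_choose_add_two_le_sq m j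
    have hC0 : (0 : ℝ) < m.choose j := by exact_mod_cast Nat.choose_pos (by omega)
    have hC1 : (0 : ℝ) < m.choose (j + 1) := by exact_mod_cast Nat.choose_pos (by omega)
    have hC2 : (0 : ℝ) < m.choose (j + 2) := by exact_mod_cast Nat.choose_pos hj
    rw [normalizedCoeff, normalizedCoeff, normalizedCoeff, div_mul_div_comm, div_pow,
      div_le_div_iff₀ (by positivity) (by positivity)] at newton
    refine le_of_mul_le_mul_right ?_ (pow_pos hC1 2)
    nlinarith [mul_le_mul_of_nonneg_left hC (sq_nonneg (p.coeff (j + 1)))]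
  · rw [coeff_eq_zero_of_natDegree_lt (n := j + 2) (by omega), mul_zero]
    positivity

end Polynomial

open Polynomial in
theorem Multiset.esymm_mul_esymm_le_sq (s : Multiset ℝ) (j : ℕ) :
    s.esymm j * s.esymm (j + 2) ≤ s.esymm (j + 1) ^ 2 := by
  by_cases hj : j + 2 ≤ card s
  · have hp : (s.map fun r => X + C r).prod.Splits :=
      Splits.multisetProd (by simp [Splits.X_add_C])
    have h := hp.coeff_mul_coeff_le_sq (card s - (j + 2))
    rw [prod_X_add_C_coeff _ (by omega), prod_X_add_C_coeff _ (by omega),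
      prod_X_add_C_coeff _ (by omega), show card s - (card s - (j + 2)) = j + 2 by omega,
      show card s - (card s - (j + 2) + 1) = j + 1 by omega,
      show card s - (card s - (j + 2) + 2) = j by omega] at h
    linarith
  · have h0 : s.esymm (j + 2) = 0 := by
      simp [esymm, powersetCard_eq_empty _ (show card s < j + 2 by omega)]
    rw [h0, mul_zero]
    positivity

theorem Multiset.esymm_cons_succ {R : Type*} [CommSemiring R] (a : R) (s : Multiset R) (j : ℕ) :
    (a ::ₘ s).esymm (j + 1) = s.esymm (j + 1) + a * s.esymm j := by
  simp only [esymm, powersetCard_cons, map_add, sum_add, map_map, Function.comp_def, prod_cons,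
    sum_map_mul_left]

theorem Multiset.esymm_nonneg_of_esymm_cons_pos (s : Multiset ℝ) {a : ℝ} (ha : 0 < a) {j : ℕ}
    (h₁ : 0 < (a ::ₘ s).esymm (j + 1)) (h₂ : 0 < (a ::ₘ s).esymm (j + 2)) :
    0 ≤ s.esymm (j + 1) := by
  rw [esymm_cons_succ] at h₁ h₂
  by_contra! hneg
  have newton := s.esymm_mul_esymm_le_sq j
  nlinarith [mul_pos ha (neg_pos.2 hneg), mul_le_mul_of_nonneg_left newton ha.le]

theorem Finset.univ_val_map_eq_cons {ι α : Type*} [Fintype ι] [DecidableEq ι] (f : ι → α)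
    (i : ι) : univ.val.map f = f i ::ₘ (univ.erase i).val.map f := by
  rw [← Multiset.map_cons, erase_val, Multiset.cons_erase (mem_univ_val i)]

theorem nH_eq_esymm (n k : ℕ) (κ : Fin n → ℝ) :
    nH n k κ = (n.choose k : ℝ)⁻¹ * (univ.val.map κ).esymm k := by
  rw [nH, esymm_map_val]

theorem pd_nH_succ (n j : ℕ) (κ : Fin n → ℝ) (i : Fin n) :
    pd (nH n (j + 1)) i κ = (n.choose (j + 1) : ℝ)⁻¹ * ((univ.erase i).val.map κ).esymm j := by
  set s := (univ.erase i).val.map κ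
  have hupdate (t : ℝ) : (univ.erase i).val.map (Function.update κ i t) = s :=
    Multiset.map_congr rfl fun l hl =>
      Function.update_of_ne (ne_of_mem_erase (s := univ) hl) _ _
  have haffine : (fun t => nH n (j + 1) (Function.update κ i t)) =
      fun t => (n.choose (j + 1) : ℝ)⁻¹ * (s.esymm (j + 1) + t * s.esymm j) := by
    funext t
    rw [nH_eq_esymm, univ_val_map_eq_cons _ i, hupdate, Function.update_self,
      Multiset.esymm_cons_succ]
  rw [pd, haffine]
  exact ((((hasDerivAt_id _).mul_const _).const_add _).const_mul _).deriv.trans (by simp)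

theorem stmt3_general (n k : ℕ) (hk1 : 1 ≤ k)
    (κ : Fin n → ℝ) (hκ : κ ∈ GC n (k + 1)) (i : Fin n) (hi : 0 < κ i) :
    pd (nH n k) i κ ≤ nH n k κ / κ i := by
  obtain ⟨j, rfl⟩ : ∃ j, k = j + 1 := ⟨k - 1, by omega⟩
  set s := (univ.erase i).val.map κ
  have hesymm_pos (l : ℕ) (hl₁ : 1 ≤ l) (hl₂ : l ≤ j + 2) : 0 < (κ i ::ₘ s).esymm l := by
    have h := hκ l hl₁ hl₂
    rw [nH_eq_esymm, univ_val_map_eq_cons κ i] at h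
    exact pos_of_mul_pos_right h (by positivity)
  have hs : 0 ≤ s.esymm (j + 1) :=
    s.esymm_nonneg_of_esymm_cons_pos hi (hesymm_pos _ hk1 (by omega))
      (hesymm_pos _ (by omega) le_rfl)
  rw [pd_nH_succ, nH_eq_esymm, univ_val_map_eq_cons κ i, Multiset.esymm_cons_succ,
    le_div_iff₀ hi]
  nlinarith [mul_nonneg (inv_nonneg.2 (Nat.cast_nonneg (n.choose (j + 1)))) hs]

theorem stmt3 (n k : ℕ) (hn : 2 ≤ n) (hk1 : 1 ≤ k) (hk2 : k ≤ n - 1)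
    (κ : Fin n → ℝ) (hκ : κ ∈ GC n (k + 1)) (i : Fin n) (hi : 0 < κ i) :
    pd (nH n k) i κ ≤ nH n k κ / κ i :=
  stmt3_general n k hk1 κ hκ i hi
end

section
/- Let f: K → ℝ be a C^1 symmetric function on an open symmetric cone K ⊆ ℝ^n that is concave on K. Then for all κ ∈ K and all indices i ≠ j with κ_i ≠ κ_j, one has (f_i(κ) - f_j(κ))/(κ_i - κ_j) ≤ 0, where f_i denotes the partial derivative of f in the i-th variable. -/
/-!
Swapping the coordinates `κ i` and `κ j` gives a point of `K` at which `f` takes the same value.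
Concavity along the segment between the two points makes the derivative of `f` at `κ` in the
direction `κ ∘ swap i j - κ = (κ j - κ i) • (e i - e j)` nonnegative, i.e.
`(κ j - κ i) * (f_i κ - f_j κ) ≥ 0`.
-/

open Finset

theorem ConcaveOn.le_add_fderiv_sub {E : Type*} [NormedAddCommGroup E] [NormedSpace ℝ E]
    {s : Set E} {f : E → ℝ} {f' : E →L[ℝ] ℝ} {x y : E} (hf : ConcaveOn ℝ s f)
    (hx : x ∈ s) (hy : y ∈ s) (hf' : HasFDerivAt f f' x) :
    f y ≤ f x + f' (y - x) := by
  have hline : ConcaveOn ℝ (AffineMap.lineMap x y ⁻¹' s) (f ∘ AffineMap.lineMap (k := ℝ) x y) :=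
    hf.comp_affineMap _
  have hderiv : HasDerivAt (f ∘ AffineMap.lineMap (k := ℝ) x y) (f' (y - x)) 0 :=
    hf'.comp_hasDerivAt_of_eq 0 AffineMap.hasDerivAt_lineMap (by simp)
  have hslope := hline.slope_le_of_hasDerivAt (x := 0) (y := 1) (by simpa using hx)
    (by simpa using hy) zero_lt_one hderiv
  simp only [slope_def_field, Function.comp_apply, AffineMap.lineMap_apply_one,
    AffineMap.lineMap_apply_zero, sub_zero, div_one] at hslope
  linarith

theorem pd_eq_of_hasFDerivAt {n : ℕ} {f : (Fin n → ℝ) → ℝ} {f' : (Fin n → ℝ) →L[ℝ] ℝ}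
    {κ : Fin n → ℝ} (hf : HasFDerivAt f f' κ) (i : Fin n) :
    pd f i κ = f' (Pi.single i 1) :=
  (hf.comp_hasDerivAt_of_eq (κ i) (hasDerivAt_update κ i (κ i)) (by simp)).deriv

theorem comp_swap_sub_self {ι R : Type*} [DecidableEq ι] [Ring R] (x : ι → R) (i j : ι) :
    x ∘ Equiv.swap i j - x = (x j - x i) • (Pi.single i 1 - Pi.single j 1) := by
  rcases eq_or_ne i j with rfl | hij
  · simp
  ext k
  rcases eq_or_ne k i with rfl | hki
  · simp [hij]
  rcases eq_or_ne k j with rfl | hkj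
  · simp [hki]
  · simp [Equiv.swap_apply_of_ne_of_ne hki hkj, hki, hkj]

theorem stmt6_general (n : ℕ) (K : Set (Fin n → ℝ)) (f : (Fin n → ℝ) → ℝ)
    (hKopen : IsOpen K)
    (hKsymm : ∀ σ : Equiv.Perm (Fin n), ∀ κ ∈ K, (κ ∘ σ) ∈ K)
    (hfsymm : ∀ σ : Equiv.Perm (Fin n), ∀ κ ∈ K, f (κ ∘ σ) = f κ)
    (hf : ContDiffOn ℝ 1 f K) (hconc : ConcaveOn ℝ K f) :
    ∀ κ ∈ K, ∀ i j : Fin n, i ≠ j → κ i ≠ κ j →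
      (pd f i κ - pd f j κ) / (κ i - κ j) ≤ 0 := by
  intro κ hκ i j _ _
  have hd : HasFDerivAt f (fderiv ℝ f κ) κ :=
    ((hf.contDiffAt (hKopen.mem_nhds hκ)).differentiableAt one_ne_zero).hasFDerivAt
  have hswap := hconc.le_add_fderiv_sub hκ (hKsymm (Equiv.swap i j) κ hκ) hd
  rw [hfsymm _ κ hκ, comp_swap_sub_self, map_smul, map_sub, ← pd_eq_of_hasFDerivAt hd,
    ← pd_eq_of_hasFDerivAt hd, smul_eq_mul, le_add_iff_nonneg_right] at hswap
  have hmul : (pd f i κ - pd f j κ) * (κ i - κ j) ≤ 0 := by linarith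
  exact div_nonpos_iff.2 (mul_nonpos_iff.1 hmul)

theorem stmt6 (n : ℕ) (K : Set (Fin n → ℝ)) (f : (Fin n → ℝ) → ℝ)
    (hKopen : IsOpen K) (hKconv : Convex ℝ K)
    (hKcone : ∀ t : ℝ, 0 < t → ∀ κ ∈ K, t • κ ∈ K)
    (hKsymm : ∀ σ : Equiv.Perm (Fin n), ∀ κ ∈ K, (κ ∘ σ) ∈ K)
    (hfsymm : ∀ σ : Equiv.Perm (Fin n), ∀ κ ∈ K, f (κ ∘ σ) = f κ)
    (hf : ContDiffOn ℝ 1 f K) (hconc : ConcaveOn ℝ K f) :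
    ∀ κ ∈ K, ∀ i j : Fin n, i ≠ j → κ i ≠ κ j →
      (pd f i κ - pd f j κ) / (κ i - κ j) ≤ 0 :=
  stmt6_general n K f hKopen hKsymm hfsymm hf hconc
end

section
/- For n ≥ 2 and κ ∈ ℝ^n with all H_j(κ) > 0 for 1 ≤ j ≤ k (i.e., κ in the Garding cone K_k), the partial derivatives of H_k are positive: ∂H_k/∂κ_i(κ) > 0 for every i. Consequently f = H_k^{1/k} satisfies f_i > 0 on K_k. -/
open Polynomial Multiset

namespace SAux

lemma msprod_pos : ∀ {s : Multiset ℝ}, (∀ x ∈ s, 0 < x) → 0 < s.prod := by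
  intro s
  induction s using Multiset.induction_on with
  | empty => intro _; simp
  | cons a s ih =>
      intro h
      rw [Multiset.prod_cons]
      exact mul_pos (h a (Multiset.mem_cons_self a s)) (ih fun x hx => h x (Multiset.mem_cons_of_mem hx))

lemma mssum_pos {s : Multiset ℝ} (h : ∀ x ∈ s, 0 < x) (hs : s ≠ 0) : 0 < s.sum := by
  obtain ⟨a, ha⟩ := Multiset.exists_mem_of_ne_zero hs
  calc (0:ℝ) < a := h a ha
  _ ≤ s.sum := Multiset.single_le_sum (fun x hx => (h x hx).le) a ha

lemma esymm_nonneg {s : Multiset ℝ} (h : ∀ x ∈ s, 0 ≤ x) (j : ℕ) : 0 ≤ s.esymm j := by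
  rw [Multiset.esymm]
  apply Multiset.sum_nonneg
  intro x hx
  obtain ⟨t, ht, rfl⟩ := Multiset.mem_map.mp hx
  have hts := (Multiset.mem_powersetCard.mp ht).1
  exact Multiset.prod_nonneg fun y hy => h y (Multiset.mem_of_le hts hy)

lemma esymm_pos {s : Multiset ℝ} (h : ∀ x ∈ s, 0 < x) {j : ℕ} (hj : j ≤ Multiset.card s) :
    0 < s.esymm j := by
  rw [Multiset.esymm]
  apply mssum_pos
  · intro x hx
    obtain ⟨t, ht, rfl⟩ := Multiset.mem_map.mp hx
    have hts := (Multiset.mem_powersetCard.mp ht).1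
    exact msprod_pos fun y hy => h y (Multiset.mem_of_le hts hy)
  · rw [Ne, ← Multiset.card_eq_zero, Multiset.card_map, Multiset.card_powersetCard]
    exact (Nat.choose_pos hj).ne'

lemma esymm_zero' (s : Multiset ℝ) : s.esymm 0 = 1 := by
  simp [Multiset.esymm]

lemma esymm_cons (a : ℝ) (s : Multiset ℝ) (j : ℕ) :
    (a ::ₘ s).esymm (j+1) = s.esymm (j+1) + a * s.esymm j := by
  rw [Multiset.esymm, Multiset.powersetCard_cons, Multiset.map_add, Multiset.sum_add,
    Multiset.map_map, Multiset.esymm, Multiset.esymm]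
  congr 1
  rw [← Multiset.sum_map_mul_left]
  refine congrArg Multiset.sum (Multiset.map_congr rfl ?_)
  intro t _
  simp [Multiset.prod_cons]

end SAux

namespace SAux

lemma mapXaddC (t : Multiset ℝ) :
    (t.map fun x => X + C x) = ((t.map Neg.neg).map fun a => X - C a) := by
  rw [Multiset.map_map]
  refine Multiset.map_congr rfl fun x _ => ?_
  simp [sub_neg_eq_add]

lemma natDegree_P (t : Multiset ℝ) : (t.map fun x => X + C x).prod.natDegree = Multiset.card t := by
  rw [mapXaddC, natDegree_multiset_prod_X_sub_C_eq_card, Multiset.card_map]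

lemma roots_P (t : Multiset ℝ) : (t.map fun x => X + C x).prod.roots = t.map Neg.neg := by
  rw [mapXaddC, roots_multiset_prod_X_sub_C]

lemma coeff_P (t : Multiset ℝ) {j : ℕ} (hj : j ≤ Multiset.card t) :
    (t.map fun x => X + C x).prod.coeff (Multiset.card t - j) = t.esymm j := by
  rw [Multiset.prod_X_add_C_coeff t (Nat.sub_le _ _), Nat.sub_sub_self hj]

end SAux

namespace SAux

lemma card_roots_iterate (p : ℝ[X]) (hp : Multiset.card p.roots = p.natDegree) (d : ℕ) :
    p.natDegree - d ≤ Multiset.card (derivative^[d] p).roots := by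
  induction d with
  | zero => simpa using hp.ge
  | succ d ih =>
      have h2 := Polynomial.card_roots_le_derivative (derivative^[d] p)
      rw [Function.iterate_succ_apply']
      omega

lemma lemA (s : Multiset ℝ) (k : ℕ) (hk : k + 1 ≤ Multiset.card s)
    (hpos : ∀ j, j ≤ k → 0 ≤ s.esymm j) (hz : s.esymm k = 0)
    (htop : 0 < s.esymm (k+1)) : False := by
  set m := Multiset.card s with hm
  set p := (s.map fun x => X + C x).prod with hp
  have hdeg : p.natDegree = m := natDegree_P s
  have hroots : Multiset.card p.roots = p.natDegree := by
    rw [hp, roots_P, Multiset.card_map, natDegree_P]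
  set d := m - (k+1) with hd
  set q := derivative^[d] p with hq
  have hqdeg : q.natDegree ≤ k + 1 := by
    have h3 := Polynomial.natDegree_iterate_derivative p d
    rw [← hq] at h3
    omega
  have hqroots : k + 1 ≤ Multiset.card q.roots := by
    have h4 := card_roots_iterate p hroots d
    rw [← hq] at h4
    omega
  have hcard' : Multiset.card q.roots ≤ q.natDegree := Polynomial.card_roots' q
  have hqdeg' : q.natDegree = k + 1 := le_antisymm hqdeg (le_trans hqroots hcard')
  have hqcard : Multiset.card q.roots = q.natDegree := by omega
  have hcoeff : ∀ i, i ≤ k + 1 → q.coeff i = ((i + d).descFactorial d : ℝ) * s.esymm (k + 1 - i) := by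
    intro i hi
    rw [hq, Polynomial.coeff_iterate_derivative, nsmul_eq_mul]
    congr 1
    have h1 : i + d = m - (k + 1 - i) := by omega
    rw [h1, hp, coeff_P s (by omega)]
  have hdf : ∀ i : ℕ, (0:ℝ) < ((i + d).descFactorial d : ℝ) := by
    intro i
    have : (i + d).descFactorial d ≠ 0 := by
      rw [Ne, Nat.descFactorial_eq_zero_iff_lt]
      omega
    exact_mod_cast Nat.pos_of_ne_zero this
  have hc0 : 0 < q.coeff 0 := by
    rw [hcoeff 0 (by omega)]
    exact mul_pos (hdf 0) htop
  have hc1 : q.coeff 1 = 0 := by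
    rw [hcoeff 1 (by omega)]
    simp [hz]
  have hcnn : ∀ i, 0 ≤ q.coeff i := by
    intro i
    by_cases hi : i ≤ k + 1
    · rw [hcoeff i hi]
      rcases Nat.eq_zero_or_pos i with h0 | h0
      · subst h0; exact (mul_pos (hdf 0) htop).le
      · exact mul_nonneg (hdf i).le (hpos _ (by omega))
    · rw [Polynomial.coeff_eq_zero_of_natDegree_lt (by omega)]
  have hlead : 0 < q.leadingCoeff := by
    rw [Polynomial.leadingCoeff, hqdeg', hcoeff _ le_rfl, Nat.sub_self, esymm_zero', mul_one]
    exact hdf _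
  have hq0 : q ≠ 0 := fun h => by simp [h] at hlead
  have hneg : ∀ r ∈ q.roots, r < 0 := by
    intro r hr
    by_contra hrn
    push_neg at hrn
    have heval : q.eval r = 0 := (Polynomial.mem_roots hq0).mp hr
    have hsum : 0 < q.eval r := by
      rw [Polynomial.eval_eq_sum_range]
      apply Finset.sum_pos'
      · intro i _
        exact mul_nonneg (hcnn i) (pow_nonneg hrn i)
      · exact ⟨0, Finset.mem_range.mpr (Nat.succ_pos _), by simpa using hc0⟩
    linarith
  set u := q.roots.map Neg.neg with hu
  have hucard : Multiset.card u = k + 1 := by rw [hu, Multiset.card_map]; omega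
  have hupos : ∀ x ∈ u, 0 < x := by
    intro x hx
    obtain ⟨r, hr, rfl⟩ := Multiset.mem_map.mp hx
    simpa using hneg r hr
  have huu : u.map Neg.neg = q.roots := by
    rw [hu, Multiset.map_map]
    simp [Function.comp_def]
  have hfact : (u.map fun x => X + C x) = q.roots.map fun a => X - C a := by
    rw [mapXaddC u, huu]
  have hqeq := (Polynomial.C_leadingCoeff_mul_prod_multiset_X_sub_C hqcard).symm
  have hcoeff1 : q.coeff 1 = q.leadingCoeff * u.esymm k := by
    conv_lhs => rw [hqeq]
    rw [Polynomial.coeff_C_mul, ← hfact]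
    congr 1
    have := coeff_P u (j := k) (by omega)
    rwa [hucard, Nat.add_sub_cancel_left] at this
  rw [hc1] at hcoeff1
  have : 0 < q.leadingCoeff * u.esymm k :=
    mul_pos hlead (esymm_pos hupos (by omega))
  rw [← hcoeff1] at this
  exact lt_irrefl 0 this

end SAux

namespace SAux

lemma taylor_prod (t : Multiset ℝ) (a b : ℝ) :
    (t.map fun x => X + C (a * x + b)).prod = taylor b (t.map fun x => X + C (a * x)).prod := by
  induction t using Multiset.induction_on with
  | empty => simp
  | cons c t ih =>
      rw [Multiset.map_cons, Multiset.map_cons, Multiset.prod_cons, Multiset.prod_cons,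
        Polynomial.taylor_mul, ← ih]
      congr 1
      simp only [Polynomial.taylor_apply, Polynomial.add_comp, Polynomial.X_comp,
        Polynomial.C_comp]
      rw [show a * c + b = b + a * c by ring, Polynomial.C_add]
      ring

lemma seg_lemma (t : Multiset ℝ) {k : ℕ} (hk : k ≤ Multiset.card t)
    (h : ∀ j, 1 ≤ j → j ≤ k → 0 < t.esymm j)
    {a b : ℝ} (ha : 0 ≤ a) (hb : 0 ≤ b) (hab : 0 < a + b)
    {j : ℕ} (hj1 : 1 ≤ j) (hjk : j ≤ k) :
    0 < (t.map fun x => a * x + b).esymm j := by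
  set m := Multiset.card t with hmdef
  have hm : j ≤ m := le_trans hjk hk
  set T := t.map fun x => a * x with hT
  set P := (T.map fun x => X + C x).prod with hP
  have hTcard : Multiset.card T = m := Multiset.card_map _ _
  have hPdeg : P.natDegree = m := by rw [hP, natDegree_P, hTcard]
  have hTesymm : ∀ i, T.esymm i = a ^ i * t.esymm i := by
    intro i
    have h0 := Multiset.pow_smul_esymm a i t
    simp only [smul_eq_mul] at h0
    rw [hT, ← h0]
  have hcoe : ∀ i ≤ j, P.coeff (i + (m - j)) = a ^ (j - i) * t.esymm (j - i) := by
    intro i hi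
    have h1 : i + (m - j) = Multiset.card T - (j - i) := by omega
    rw [h1, hP, coeff_P T (by omega), hTesymm]
  have key : (t.map fun x => a * x + b).esymm j
      = ∑ i ∈ Finset.range (j+1),
          (((i + (m - j)).choose (m - j) : ℝ) * (a ^ (j-i) * t.esymm (j-i))) * b ^ i := by
    have hprod : ((t.map fun x => a * x + b).map fun x => X + C x).prod = taylor b P := by
      rw [Multiset.map_map, hP, hT, Multiset.map_map]
      exact taylor_prod t a b
    have h2 : (t.map fun x => a * x + b).esymm j
        = ((t.map fun x => a * x + b).map fun x => X + C x).prod.coeff (m - j) := by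
      have h3 := coeff_P (t.map fun x => a * x + b) (j := j)
        (by rw [Multiset.card_map]; exact hm)
      rw [Multiset.card_map] at h3
      exact h3.symm
    rw [h2, hprod, Polynomial.taylor_coeff]
    have hdeg2 : (Polynomial.hasseDeriv (m - j) P).natDegree < j + 1 := by
      have h4 := Polynomial.natDegree_hasseDeriv_le P (m - j)
      omega
    rw [Polynomial.eval_eq_sum_range' hdeg2]
    refine Finset.sum_congr rfl fun i hi => ?_
    rw [Polynomial.hasseDeriv_coeff, hcoe i (by
      simpa using Nat.lt_succ_iff.mp (Finset.mem_range.mp hi))]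
  rw [key]
  have hesnn : ∀ i, i ≤ j → 0 ≤ t.esymm (j - i) := by
    intro i hi
    rcases Nat.eq_zero_or_pos (j - i) with h0 | h0
    · rw [h0, esymm_zero']; exact zero_le_one
    · exact (h _ h0 (by omega)).le
  apply Finset.sum_pos'
  · intro i hi
    have hij : i ≤ j := Nat.lt_succ_iff.mp (Finset.mem_range.mp hi)
    exact mul_nonneg (mul_nonneg (Nat.cast_nonneg _)
      (mul_nonneg (pow_nonneg ha _) (hesnn i hij))) (pow_nonneg hb _)
  · rcases eq_or_lt_of_le hb with hb0 | hb0
    · have ha0 : 0 < a := by linarith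
      refine ⟨0, Finset.mem_range.mpr (Nat.succ_pos _), ?_⟩
      simp only [Nat.zero_add, Nat.choose_self, Nat.sub_zero, pow_zero, mul_one,
        Nat.cast_one, one_mul]
      exact mul_pos (pow_pos ha0 _) (h j hj1 hjk)
    · refine ⟨j, Finset.mem_range.mpr (Nat.lt_succ_self _), ?_⟩
      have hch : 0 < ((j + (m - j)).choose (m - j) : ℝ) := by
        exact_mod_cast Nat.choose_pos (Nat.le_add_left _ _)
      rw [Nat.sub_self, pow_zero, esymm_zero', mul_one, mul_one]
      exact mul_pos hch (pow_pos hb0 j)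

end SAux

namespace SAux

lemma esymm_of_card_lt {s : Multiset ℝ} {j : ℕ} (h : Multiset.card s < j) : s.esymm j = 0 := by
  rw [Multiset.esymm, Multiset.powersetCard_eq_empty _ h]
  simp

lemma univ_val_cons (n : ℕ) (κ : Fin n → ℝ) (i : Fin n) :
    Finset.univ.val.map κ = κ i ::ₘ (Finset.univ.erase i).val.map κ := by
  rw [Finset.erase_val]
  have hmem : i ∈ Finset.univ.val := Finset.mem_univ_val i
  conv_lhs => rw [← Multiset.cons_erase hmem]
  rw [Multiset.map_cons]

end SAux

namespace SAux

lemma card_univ_val (n : ℕ) (κ : Fin n → ℝ) :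
    Multiset.card (Finset.univ.val.map κ) = n := by
  rw [Multiset.card_map]
  simp [Finset.card_univ]

lemma card_erase_val (n : ℕ) (κ : Fin n → ℝ) (i : Fin n) :
    Multiset.card ((Finset.univ.erase i).val.map κ) = n - 1 := by
  rw [Multiset.card_map, ← Finset.card_def, Finset.card_erase_of_mem (Finset.mem_univ i)]
  simp [Finset.card_univ]

lemma main : ∀ k n : ℕ, ∀ κ : Fin n → ℝ, ∀ i : Fin n, k + 1 ≤ n →
    (∀ j, 1 ≤ j → j ≤ k + 1 → 0 < (Finset.univ.val.map κ).esymm j) →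
    0 < ((Finset.univ.erase i).val.map κ).esymm k := by
  intro k
  induction k using Nat.strong_induction_on with
  | _ k IH =>
    intro n κ i hkn hpos
    rcases Nat.eq_zero_or_pos k with rfl | hk1
    · rw [esymm_zero']; exact zero_lt_one
    set E : ℝ → Multiset ℝ :=
      fun s => ((Finset.univ.erase i).val.map κ).map (fun x => (1-s) * x + s) with hE
    set F : ℝ → Multiset ℝ :=
      fun s => (Finset.univ.val.map κ).map (fun x => (1-s) * x + s) with hF
    set h : ℝ → ℝ := fun s => (E s).esymm k with hh
    have hFcard : ∀ s, Multiset.card (F s) = n := fun s => by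
      simp only [hF]
      rw [Multiset.card_map, card_univ_val]
    have hEcard : ∀ s, Multiset.card (E s) = n - 1 := fun s => by
      simp only [hE]
      rw [Multiset.card_map, card_erase_val]
    have hcons : ∀ s : ℝ, F s = ((1-s) * κ i + s) ::ₘ E s := fun s => by
      simp only [hF, hE]
      rw [univ_val_cons n κ i, Multiset.map_cons]
    have hFpos : ∀ s : ℝ, 0 ≤ s → s ≤ 1 → ∀ j, 1 ≤ j → j ≤ k + 1 → 0 < (F s).esymm j := by
      intro s hs0 hs1 j hj1 hjk
      refine seg_lemma (Finset.univ.val.map κ) (k := k+1)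
        (by rw [card_univ_val]; exact hkn) hpos (a := 1 - s) (b := s)
        (by linarith) hs0 (by linarith) hj1 hjk
    -- the mapped full/erased multisets are the full/erased multisets of the moved κ
    have hEmap : ∀ s : ℝ,
        (Finset.univ.erase i).val.map (fun x => (1-s) * κ x + s) = E s := by
      intro s
      simp only [hE, Multiset.map_map]
      rfl
    have hFmap : ∀ s : ℝ,
        Finset.univ.val.map (fun x => (1-s) * κ x + s) = F s := by
      intro s
      simp only [hF, Multiset.map_map]
      rfl
    have hner : ∀ s : ℝ, 0 ≤ s → s ≤ 1 → h s ≠ 0 := by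
      intro s hs0 hs1 hzero
      simp only [hh] at hzero
      have hconsE := esymm_cons ((1-s) * κ i + s) (E s) k
      rw [← hcons s] at hconsE
      rcases Nat.lt_or_ge (k + 1) n with hlt | hge
      · -- k + 2 ≤ n : use lemA
        refine lemA (E s) k (by rw [hEcard]; omega) ?_ hzero ?_
        · intro j hj
          rcases Nat.eq_zero_or_pos j with rfl | hj1
          · rw [esymm_zero']; exact zero_le_one
          rcases Nat.lt_or_ge j k with hjlt | hjge
          · -- use IH
            have := IH j hjlt n (fun x => (1-s) * κ x + s) i (by omega)
              (fun j' hj'1 hj'2 => by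
                rw [hFmap]
                exact hFpos s hs0 hs1 j' hj'1 (by omega))
            rw [hEmap] at this
            exact this.le
          · have : j = k := by omega
            rw [this, hzero]
        · have hF1 := hFpos s hs0 hs1 (k+1) (by omega) le_rfl
          rw [hconsE, hzero, mul_zero, add_zero] at hF1
          exact hF1
      · -- k + 1 = n
        have hkn' : k + 1 = n := by omega
        have hEk : (E s).esymm (k+1) = 0 :=
          esymm_of_card_lt (by rw [hEcard]; omega)
        have h0 : (F s).esymm (k+1) = 0 := by
          rw [hconsE, hEk, hzero, mul_zero, add_zero]
        have := hFpos s hs0 hs1 (k+1) (by omega) le_rfl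
        rw [h0] at this
        exact lt_irrefl 0 this
    have hcont : Continuous h := by
      have hrepr : ∀ s : ℝ, h s = ∑ T ∈ (Finset.univ.erase i).powersetCard k,
          ∏ x ∈ T, ((1-s) * κ x + s) := by
        intro s
        simp only [hh]
        rw [← hEmap s, Finset.esymm_map_val]
      rw [show h = fun s => ∑ T ∈ (Finset.univ.erase i).powersetCard k,
          ∏ x ∈ T, ((1-s) * κ x + s) from funext hrepr]
      apply continuous_finset_sum
      intro T _
      apply continuous_finset_prod
      intro x _
      fun_prop
    have h1pos : 0 < h 1 := by
      simp only [hh]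
      refine esymm_pos ?_ (by rw [hEcard]; omega)
      intro x hx
      obtain ⟨y, _, rfl⟩ := Multiset.mem_map.mp hx
      norm_num
    have h0eq : h 0 = ((Finset.univ.erase i).val.map κ).esymm k := by
      simp only [hh, hE]
      congr 1
      rw [show (fun x : ℝ => (1-(0:ℝ)) * x + 0) = id from funext fun x => by simp]
      rw [Multiset.map_id]
    rw [← h0eq]
    rcases lt_trichotomy (h 0) 0 with hneg | hzero | hposi
    · exfalso
      have hsub := intermediate_value_Icc (zero_le_one (α := ℝ)) hcont.continuousOn
      have h0mem : (0:ℝ) ∈ Set.Icc (h 0) (h 1) := ⟨hneg.le, h1pos.le⟩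
      obtain ⟨s, hs, hzs⟩ := hsub h0mem
      exact hner s hs.1 hs.2 hzs
    · exact absurd hzero (hner 0 le_rfl zero_le_one)
    · exact hposi

end SAux

namespace SAux

lemma update_sum (n kk : ℕ) (κ : Fin n → ℝ) (i : Fin n) (t : ℝ) :
    ∑ S ∈ Finset.univ.powersetCard (kk+1), ∏ j ∈ S, Function.update κ i t j
    = (∑ S ∈ (Finset.univ.powersetCard (kk+1)).filter (fun S => ¬ i ∈ S), ∏ j ∈ S, κ j)
      + (∑ T ∈ (Finset.univ.erase i).powersetCard kk, ∏ j ∈ T, κ j) * t := by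
  classical
  rw [← Finset.sum_filter_add_sum_filter_not (Finset.univ.powersetCard (kk+1))
    (fun S => i ∈ S), add_comm]
  congr 1
  · apply Finset.sum_congr rfl
    intro S hS
    have hiS : i ∉ S := (Finset.mem_filter.mp hS).2
    apply Finset.prod_congr rfl
    intro j hj
    exact Function.update_of_ne (show j ≠ i by rintro rfl; exact hiS hj) t κ
  · rw [Finset.sum_mul]
    refine Finset.sum_nbij' (fun S => S.erase i) (fun T => insert i T) ?_ ?_ ?_ ?_ ?_
    · intro S hS
      obtain ⟨hSmem, hiS⟩ := Finset.mem_filter.mp hS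
      obtain ⟨_, hcard⟩ := Finset.mem_powersetCard.mp hSmem
      refine Finset.mem_powersetCard.mpr ⟨?_, ?_⟩
      · exact Finset.erase_subset_erase i (Finset.subset_univ S)
      · rw [Finset.card_erase_of_mem hiS, hcard]
        omega
    · intro T hT
      obtain ⟨hTsub, hTcard⟩ := Finset.mem_powersetCard.mp hT
      have hiT : i ∉ T := fun hmem => (Finset.mem_erase.mp (hTsub hmem)).1 rfl
      refine Finset.mem_filter.mpr ⟨Finset.mem_powersetCard.mpr
        ⟨Finset.subset_univ _, ?_⟩, Finset.mem_insert_self i T⟩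
      rw [Finset.card_insert_of_notMem hiT, hTcard]
    · intro S hS
      exact Finset.insert_erase (Finset.mem_filter.mp hS).2
    · intro T hT
      obtain ⟨hTsub, _⟩ := Finset.mem_powersetCard.mp hT
      have hiT : i ∉ T := fun hmem => (Finset.mem_erase.mp (hTsub hmem)).1 rfl
      exact Finset.erase_insert hiT
    · intro S hS
      have hiS : i ∈ S := (Finset.mem_filter.mp hS).2
      rw [← Finset.mul_prod_erase S _ hiS, Function.update_self, mul_comm]
      congr 1
      apply Finset.prod_congr rfl
      intro j hj
      exact Function.update_of_ne (Finset.ne_of_mem_erase hj) t κ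

end SAux

open Finset

theorem stmt19 (n k : ℕ) (hn : 2 ≤ n) (hk1 : 1 ≤ k) (hk2 : k ≤ n)
    (κ : Fin n → ℝ) (hκ : κ ∈ GC n k) :
    (∀ i : Fin n, 0 < pd (nH n k) i κ) ∧
      ∀ i : Fin n, 0 < pd (fun x => (nH n k x) ^ ((k : ℝ)⁻¹)) i κ := by
  obtain ⟨k, rfl⟩ : ∃ m, k = m + 1 := ⟨k - 1, by omega⟩
  have hes : ∀ j, 1 ≤ j → j ≤ k + 1 → 0 < (Finset.univ.val.map κ).esymm j := by
    intro j hj1 hjk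
    have hval := hκ j hj1 hjk
    rw [nH] at hval
    have hc : (0:ℝ) < (n.choose j : ℝ) := by
      exact_mod_cast Nat.choose_pos (le_trans hjk hk2)
    have h2 := mul_pos hc hval
    rw [← mul_assoc, mul_inv_cancel₀ hc.ne', one_mul] at h2
    rw [Finset.esymm_map_val]
    exact h2
  have hchoose : (0:ℝ) < (n.choose (k+1) : ℝ) := by
    exact_mod_cast Nat.choose_pos hk2
  have hB : ∀ i : Fin n,
      0 < ∑ T ∈ (Finset.univ.erase i).powersetCard k, ∏ j ∈ T, κ j := by
    intro i
    have hmain := SAux.main k n κ i hk2 hes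
    rwa [Finset.esymm_map_val] at hmain
  have hderiv : ∀ i : Fin n,
      HasDerivAt (fun t => nH n (k+1) (Function.update κ i t))
        ((n.choose (k+1) : ℝ)⁻¹ *
          (∑ T ∈ (Finset.univ.erase i).powersetCard k, ∏ j ∈ T, κ j)) (κ i) := by
    intro i
    set A := ∑ S ∈ (Finset.univ.powersetCard (k+1)).filter (fun S => ¬ i ∈ S),
      ∏ j ∈ S, κ j with hA
    set B := ∑ T ∈ (Finset.univ.erase i).powersetCard k, ∏ j ∈ T, κ j with hBdef
    have heq : (fun t => nH n (k+1) (Function.update κ i t))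
        = fun t => (n.choose (k+1) : ℝ)⁻¹ * (A + B * t) := by
      funext t
      rw [nH, SAux.update_sum n k κ i t]
    rw [heq]
    have h1 : HasDerivAt (fun t : ℝ => A + B * t) B (κ i) := by
      simpa using ((hasDerivAt_id (κ i)).const_mul B).const_add A
    simpa using h1.const_mul ((n.choose (k+1) : ℝ)⁻¹)
  constructor
  · intro i
    have hd := (hderiv i).deriv
    show 0 < deriv (fun t => nH n (k+1) (Function.update κ i t)) (κ i)
    rw [hd]
    exact mul_pos (inv_pos.mpr hchoose) (hB i)
  · intro i
    have hgpos : 0 < nH n (k+1) κ := hκ (k+1) (by omega) le_rfl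
    have hval : nH n (k+1) (Function.update κ i (κ i)) = nH n (k+1) κ := by
      rw [Function.update_eq_self]
    have hd2 := (hderiv i).rpow_const (p := ((k+1 : ℕ) : ℝ)⁻¹)
      (Or.inl (by rw [hval]; exact hgpos.ne'))
    have hd3 := hd2.deriv
    show 0 < deriv
      (fun t => (nH n (k+1) (Function.update κ i t)) ^ (((k+1:ℕ) : ℝ))⁻¹) (κ i)
    rw [hd3, hval]
    have hp1 : (0:ℝ) < (((k+1 : ℕ) : ℝ))⁻¹ := by
      apply inv_pos.mpr
      exact_mod_cast Nat.succ_pos k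
    exact mul_pos (mul_pos (mul_pos (inv_pos.mpr hchoose) (hB i)) hp1)
      (Real.rpow_pos_of_pos hgpos _)
end
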